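/- For every SID Δ and nullary predicate A, if ef*(C[[A]]_Δ) is treewidth-bounded, then ief*(C[[A]]_Δ) is treewidth-bounded. -/

import Mathlib

/-!
Common definitions for the formalization of
"The Treewidth Boundedness Problem for an Inductive Separation Logic of Relations".
-/

namespace SLRTW

/-! ### Relational structures over a fixed universe `V` -/

/-- A structure over the relational signature given by `Rel`, `ar` with universe `V`:
each relation symbol is interpreted as a finite set of tuples, and only finitely many
relation symbols have a nonempty interpretation. -/
structure Str (Rel : Type) (ar : Rel → ℕ) (V : Type) where
  interp : ∀ r : Rel, Set (Fin (ar r) → V)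
  finite_interp : ∀ r, (interp r).Finite
  finite_active : {r : Rel | interp r ≠ ∅}.Finite

/-- Formulas of the separation logic of relations, over relation symbols `Rel` (with
arities `ar`) and predicate symbols `Pr` (with arities `pa`).  Variables are natural
numbers; by convention, the parameters of a predicate of arity `n` are `0, …, n-1`. -/
inductive SLR (Rel : Type) (ar : Rel → ℕ) (Pr : Type) (pa : Pr → ℕ) : Type where
  | emp : SLR Rel ar Pr pa
  | eq (x y : ℕ) : SLR Rel ar Pr pa
  | ne (x y : ℕ) : SLR Rel ar Pr pa
  | rel (r : Rel) (a : Fin (ar r) → ℕ) : SLR Rel ar Pr pa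
  | pred (A : Pr) (a : Fin (pa A) → ℕ) : SLR Rel ar Pr pa
  | star (φ ψ : SLR Rel ar Pr pa) : SLR Rel ar Pr pa
  | ex (x : ℕ) (φ : SLR Rel ar Pr pa) : SLR Rel ar Pr pa

/-- An RGB color scheme: a partition of the set of colors `𝒫(Rel)` into red, green
and blue colors, such that any two blue colors intersect, every green color intersects
every blue color, and every red color is disjoint from some blue color. -/
structure RGB (Rel : Type) where
  red : Set (Set Rel)
  green : Set (Set Rel)
  blue : Set (Set Rel)
  cover : ∀ C : Set Rel, C ∈ red ∨ C ∈ green ∨ C ∈ blue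
  red_green : red ∩ green = ∅
  red_blue : red ∩ blue = ∅
  green_blue : green ∩ blue = ∅
  blue_blue_meet : ∀ C1 ∈ blue, ∀ C2 ∈ blue, (C1 ∩ C2).Nonempty
  green_blue_meet : ∀ C1 ∈ green, ∀ C2 ∈ blue, (C1 ∩ C2).Nonempty
  red_sep : ∀ C1 ∈ red, ∃ C2 ∈ blue, C1 ∩ C2 = ∅

section Defs1

variable {Rel : Type} {ar : Rel → ℕ} {V : Type} {Pr : Type} {pa : Pr → ℕ}

/-- The support of a structure: the elements occurring in some tuple. -/
def Str.supp (S : Str Rel ar V) : Set V :=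
  { u | ∃ (r : Rel) (t : Fin (ar r) → V), t ∈ S.interp r ∧ ∃ i, t i = u }

/-- Two structures are locally disjoint iff their interpretations are pointwise disjoint. -/
def LocDisj (S1 S2 : Str Rel ar V) : Prop :=
  ∀ r, S1.interp r ∩ S2.interp r = ∅

/-- Composition of structures (pointwise union of the interpretations). -/
def Str.comp (S1 S2 : Str Rel ar V) : Str Rel ar V where
  interp r := S1.interp r ∪ S2.interp r
  finite_interp r := (S1.finite_interp r).union (S2.finite_interp r)
  finite_active := by
    refine (S1.finite_active.union S2.finite_active).subset ?_
    intro r hr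
    simp only [Set.mem_setOf_eq, Set.mem_union, ne_eq] at hr ⊢
    rw [Set.union_empty_iff] at hr
    tauto

/-- Composition of a finite family of structures. -/
def bigComp {n : ℕ} (Ss : Fin n → Str Rel ar V) : Str Rel ar V where
  interp r := ⋃ i, (Ss i).interp r
  finite_interp r := Set.finite_iUnion fun i => (Ss i).finite_interp r
  finite_active := by
    refine (Set.finite_iUnion fun i => (Ss i).finite_active).subset ?_
    intro r hr
    simp only [Set.mem_setOf_eq, ne_eq, Set.iUnion_eq_empty, Set.mem_iUnion] at hr ⊢
    push_neg at hr
    obtain ⟨i, hi⟩ := hr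
    exact ⟨i, Set.nonempty_iff_ne_empty.mp hi⟩

/-- A tree decomposition of a structure: a finite tree whose nodes carry finite bags of
elements, covering every tuple, and such that the set of nodes containing any given
support element is nonempty and connected. -/
structure TreeDecomp (S : Str Rel ar V) where
  ι : Type
  instFin : Fintype ι
  G : SimpleGraph ι
  isTree : G.IsTree
  bag : ι → Finset V
  bag_cover : ∀ (r : Rel), ∀ t ∈ S.interp r, ∃ n : ι, ∀ i, t i ∈ bag n
  bag_conn : ∀ u ∈ S.supp, (SimpleGraph.induce {n : ι | u ∈ bag n} G).Connected

attribute [instance] TreeDecomp.instFin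

/-- The width of a tree decomposition: maximal bag size minus one. -/
def TreeDecomp.width {S : Str Rel ar V} (T : TreeDecomp S) : ℕ :=
  (Finset.univ.sup fun n : T.ι => (T.bag n).card) - 1

/-- The treewidth of a structure: the minimal width of a tree decomposition. -/
noncomputable def tw (S : Str Rel ar V) : ℕ :=
  sInf { w | ∃ T : TreeDecomp S, T.width = w }

/-- A set of structures is treewidth-bounded iff the treewidths of its members are
bounded. -/
def TWB (𝒮 : Set (Str Rel ar V)) : Prop :=
  ∃ k : ℕ, ∀ S ∈ 𝒮, tw S ≤ k

/-- The supremum of the treewidths of a set of structures (in `ℕ∞`). -/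
noncomputable def twSet (𝒮 : Set (Str Rel ar V)) : ℕ∞ :=
  ⨆ S ∈ 𝒮, (tw S : ℕ∞)

namespace SLR

/-- Free variables of a formula. -/
def fv : SLR Rel ar Pr pa → Set ℕ
  | .emp => ∅
  | .eq x y => {x, y}
  | .ne x y => {x, y}
  | .rel _ a => Set.range a
  | .pred _ a => Set.range a
  | .star φ ψ => φ.fv ∪ ψ.fv
  | .ex x φ => φ.fv \ {x}

/-- All variables (free or bound) occurring in a formula. -/
def vars : SLR Rel ar Pr pa → Set ℕ
  | .emp => ∅
  | .eq x y => {x, y}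
  | .ne x y => {x, y}
  | .rel _ a => Set.range a
  | .pred _ a => Set.range a
  | .star φ ψ => φ.vars ∪ ψ.vars
  | .ex x φ => insert x φ.vars

/-- Predicate-free formulas. -/
def PredFree : SLR Rel ar Pr pa → Prop
  | .pred _ _ => False
  | .star φ ψ => φ.PredFree ∧ ψ.PredFree
  | .ex _ φ => φ.PredFree
  | _ => True

/-- Quantifier- and predicate-free (qpf) formulas. -/
def QPF : SLR Rel ar Pr pa → Prop
  | .pred _ _ => False
  | .ex _ _ => False
  | .star φ ψ => φ.QPF ∧ ψ.QPF
  | _ => True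

/-- Formulas containing only relation atoms. -/
def RelOnly : SLR Rel ar Pr pa → Prop
  | .rel _ _ => True
  | .star φ ψ => φ.RelOnly ∧ ψ.RelOnly
  | _ => False

/-- Formulas containing only equality atoms (and `emp`). -/
def EqOnly : SLR Rel ar Pr pa → Prop
  | .emp => True
  | .eq _ _ => True
  | .star φ ψ => φ.EqOnly ∧ ψ.EqOnly
  | _ => False

/-- Equality-free formulas: no equality atom and no predicate atom in which the same
variable occurs twice. -/
def EqFreeF : SLR Rel ar Pr pa → Prop
  | .eq _ _ => False
  | .pred _ a => Function.Injective a
  | .star φ ψ => φ.EqFreeF ∧ ψ.EqFreeF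
  | .ex _ φ => φ.EqFreeF
  | _ => True

/-- The number of predicate atoms occurring in a formula. -/
def npred : SLR Rel ar Pr pa → ℕ
  | .pred _ _ => 1
  | .star φ ψ => φ.npred + ψ.npred
  | .ex _ φ => φ.npred
  | _ => 0

/-- The number of relation atoms occurring in a formula. -/
def nrel : SLR Rel ar Pr pa → ℕ
  | .rel _ _ => 1
  | .star φ ψ => φ.nrel + ψ.nrel
  | .ex _ φ => φ.nrel
  | _ => 0

/-- The set of relation symbols occurring in a formula. -/
def rels : SLR Rel ar Pr pa → Set Rel
  | .rel r _ => {r}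
  | .star φ ψ => φ.rels ∪ ψ.rels
  | .ex _ φ => φ.rels
  | _ => ∅

/-- The set of predicate symbols occurring in a formula. -/
def preds : SLR Rel ar Pr pa → Set Pr
  | .pred A _ => {A}
  | .star φ ψ => φ.preds ∪ ψ.preds
  | .ex _ φ => φ.preds
  | _ => ∅

/-- The quantifier-free matrix of a formula (erasing all existential quantifiers). -/
def matrix : SLR Rel ar Pr pa → SLR Rel ar Pr pa
  | .ex _ φ => φ.matrix
  | .star φ ψ => .star φ.matrix ψ.matrix
  | φ => φ

/-- The list of bound variables of a formula. -/
def binders : SLR Rel ar Pr pa → List ℕ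
  | .ex x φ => x :: φ.binders
  | .star φ ψ => φ.binders ++ ψ.binders
  | _ => []

/-- A formula is well-named iff its bound variables are pairwise distinct and distinct
from its free variables.  For a well-named formula, the matrix faithfully represents
the prenex form. -/
def WellNamed (χ : SLR Rel ar Pr pa) : Prop :=
  χ.binders.Nodup ∧ ∀ x ∈ χ.binders, x ∉ χ.fv

/-- The disequality `x ≠ y` occurs in the formula (as an unordered pair). -/
def neOccurs : SLR Rel ar Pr pa → ℕ → ℕ → Prop
  | .ne a b, x, y => (a = x ∧ b = y) ∨ (a = y ∧ b = x)
  | .star φ ψ, x, y => φ.neOccurs x y ∨ ψ.neOccurs x y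
  | .ex _ φ, x, y => φ.neOccurs x y
  | _, _, _ => False

/-- The equality `x = y` occurs in the formula (as an unordered pair). -/
def eqOccurs : SLR Rel ar Pr pa → ℕ → ℕ → Prop
  | .eq a b, x, y => (a = x ∧ b = y) ∨ (a = y ∧ b = x)
  | .star φ ψ, x, y => φ.eqOccurs x y ∨ ψ.eqOccurs x y
  | .ex _ φ, x, y => φ.eqOccurs x y
  | _, _, _ => False

end SLR

/-- The nullary predicate atom `A()` (the arguments are irrelevant when `pa A = 0`). -/
def natom (A : Pr) : SLR Rel ar Pr pa := .pred A fun _ => 0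

/-- Iterated separating conjunction: `starAll φ [χ1, …, χn] = χ1 * (χ2 * … * (χn * φ))`. -/
def starAll (φ : SLR Rel ar Pr pa) : List (SLR Rel ar Pr pa) → SLR Rel ar Pr pa
  | [] => φ
  | χ :: l => .star χ (starAll φ l)

end Defs1

/-- A set of inductive definitions (SID): a finite set of rules `A(0,…,pa A - 1) ← φ`
where the free variables of `φ` are among the parameters `0, …, pa A - 1`. -/
structure SID (Rel : Type) (ar : Rel → ℕ) (Pr : Type) (pa : Pr → ℕ) where
  rules : Pr → Set (SLR Rel ar Pr pa)
  finite_rules : {p : Pr × SLR Rel ar Pr pa | p.2 ∈ rules p.1}.Finite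
  wf : ∀ A, ∀ φ ∈ rules A, SLR.fv φ ⊆ {x | x < pa A}

section Defs2

variable {Rel : Type} {ar : Rel → ℕ} {V : Type} {Pr : Type} {pa : Pr → ℕ}

/-- The empty structure predicate. -/
def EmpS (S : Str Rel ar V) : Prop := ∀ r, S.interp r = ∅

/-- The satisfaction relation of SLR, parameterized by a store and an SID.
A predicate atom `A(y₁,…,yₙ)` is satisfied iff the body of some rule for `A` is
satisfied under the store mapping the parameter `i` to the value of `yᵢ₊₁`. -/
inductive Sat (Δ : SID Rel ar Pr pa) :
    Str Rel ar V → (ℕ → V) → SLR Rel ar Pr pa → Prop where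
  | emp {S : Str Rel ar V} {s : ℕ → V} : EmpS S → Sat Δ S s .emp
  | eq {S : Str Rel ar V} {s : ℕ → V} {x y : ℕ} :
      EmpS S → s x = s y → Sat Δ S s (.eq x y)
  | ne {S : Str Rel ar V} {s : ℕ → V} {x y : ℕ} :
      EmpS S → s x ≠ s y → Sat Δ S s (.ne x y)
  | rel {S : Str Rel ar V} {s : ℕ → V} {r : Rel} {a : Fin (ar r) → ℕ} :
      S.interp r = {fun i => s (a i)} → (∀ r', r' ≠ r → S.interp r' = ∅) →
      Sat Δ S s (.rel r a)
  | pred {S : Str Rel ar V} {s : ℕ → V} {A : Pr} {a : Fin (pa A) → ℕ}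
      {body : SLR Rel ar Pr pa} :
      body ∈ Δ.rules A →
      Sat Δ S (fun n => if h : n < pa A then s (a ⟨n, h⟩) else s n) body →
      Sat Δ S s (.pred A a)
  | star {S1 S2 : Str Rel ar V} {s : ℕ → V} {φ ψ : SLR Rel ar Pr pa} :
      LocDisj S1 S2 → Sat Δ S1 s φ → Sat Δ S2 s ψ →
      Sat Δ (S1.comp S2) s (.star φ ψ)
  | ex {S : Str Rel ar V} {s : ℕ → V} {x : ℕ} {φ : SLR Rel ar Pr pa} (u : V) :
      Sat Δ S (Function.update s x u) φ → Sat Δ S s (.ex x φ)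

/-- The set of `Δ`-models of a sentence (over universe `V`). -/
def SMod (Δ : SID Rel ar Pr pa) (φ : SLR Rel ar Pr pa) : Set (Str Rel ar V) :=
  { S | ∃ s : ℕ → V, Sat Δ S s φ }

/-- `IsSubst f φ φ'` holds iff `φ'` is obtained from `φ` by the capture-avoiding
substitution of `f x` for each free variable `x`, the bound variables being renamed
to avoid clashes. -/
inductive IsSubst : (ℕ → ℕ) → SLR Rel ar Pr pa → SLR Rel ar Pr pa → Prop where
  | emp {f : ℕ → ℕ} : IsSubst f .emp .emp
  | eq {f : ℕ → ℕ} {x y : ℕ} : IsSubst f (.eq x y) (.eq (f x) (f y))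
  | ne {f : ℕ → ℕ} {x y : ℕ} : IsSubst f (.ne x y) (.ne (f x) (f y))
  | rel {f : ℕ → ℕ} {r : Rel} {a : Fin (ar r) → ℕ} :
      IsSubst f (.rel r a) (.rel r (f ∘ a))
  | pred {f : ℕ → ℕ} {A : Pr} {a : Fin (pa A) → ℕ} :
      IsSubst f (.pred A a) (.pred A (f ∘ a))
  | star {f : ℕ → ℕ} {φ ψ φ' ψ' : SLR Rel ar Pr pa} :
      IsSubst f φ φ' → IsSubst f ψ ψ' → IsSubst f (.star φ ψ) (.star φ' ψ')
  | ex {f : ℕ → ℕ} {x z : ℕ} {φ φ' : SLR Rel ar Pr pa} :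
      (∀ y ∈ SLR.fv φ, y ≠ x → f y ≠ z) →
      IsSubst (Function.update f x z) φ φ' →
      IsSubst f (.ex x φ) (.ex z φ')

/-- One unfolding step: replace one predicate atom `A(y₁,…,yₙ)` by the body of a rule
for `A`, with the parameters substituted by `y₁,…,yₙ` (bound variables renamed to
avoid clashes). -/
inductive Step (Δ : SID Rel ar Pr pa) : SLR Rel ar Pr pa → SLR Rel ar Pr pa → Prop where
  | unfold {A : Pr} {a : Fin (pa A) → ℕ} {body ψ : SLR Rel ar Pr pa} :
      body ∈ Δ.rules A →
      IsSubst (fun n => if h : n < pa A then a ⟨n, h⟩ else n) body ψ →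
      Step Δ (.pred A a) ψ
  | starL {φ φ' ψ : SLR Rel ar Pr pa} : Step Δ φ φ' → Step Δ (.star φ ψ) (.star φ' ψ)
  | starR {φ ψ ψ' : SLR Rel ar Pr pa} : Step Δ ψ ψ' → Step Δ (.star φ ψ) (.star φ ψ')
  | exC {x : ℕ} {φ φ' : SLR Rel ar Pr pa} : Step Δ φ φ' → Step Δ (.ex x φ) (.ex x φ')

/-- `Δ`-unfolding: the reflexive-transitive closure of unfolding steps. -/
def Unfolds (Δ : SID Rel ar Pr pa) : SLR Rel ar Pr pa → SLR Rel ar Pr pa → Prop :=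
  Relation.ReflTransGen (Step Δ)

/-- `x = y` is a logical consequence of `ψ`. -/
def EqConseq (Δ : SID Rel ar Pr pa) (ψ : SLR Rel ar Pr pa) (x y : ℕ) : Prop :=
  ∀ (S : Str Rel ar V) (s : ℕ → V), Sat Δ S s ψ → s x = s y

/-- A store is canonical for `ψ` iff it identifies only variables that are equated as a
logical consequence of `ψ`. -/
def CanonicalStore (Δ : SID Rel ar Pr pa) (s : ℕ → V) (ψ : SLR Rel ar Pr pa) : Prop :=
  ∀ x ∈ ψ.fv, ∀ y ∈ ψ.fv, s x = s y → EqConseq (V := V) Δ ψ x y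

/-- `(S, d)` is a rich canonical `Δ`-model of `φ`: for some complete `Δ`-unfolding of
`φ` into a well-named predicate-free formula `χ` (i.e. of the form `∃x⃗.ψ` with `ψ` qpf,
up to hoisting of quantifiers) and some store canonical for the matrix `ψ`, the
structure `S` satisfies `ψ` and `d` records the disequalities of `ψ` under the store. -/
def RichCanonical (Δ : SID Rel ar Pr pa) (φ : SLR Rel ar Pr pa)
    (S : Str Rel ar V) (d : V → V → Prop) : Prop :=
  ∃ χ : SLR Rel ar Pr pa, Unfolds Δ φ χ ∧ χ.PredFree ∧ χ.WellNamed ∧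
    ∃ s : ℕ → V, CanonicalStore Δ s χ.matrix ∧ Sat Δ S s χ.matrix ∧
      ∀ u v : V, d u v ↔ ∃ x y : ℕ, s x = u ∧ s y = v ∧ χ.matrix.neOccurs x y

/-- The set of canonical `Δ`-models of `φ`. -/
def Canonical (Δ : SID Rel ar Pr pa) (φ : SLR Rel ar Pr pa) : Set (Str Rel ar V) :=
  { S | ∃ d, RichCanonical Δ φ S d }

/-- `S1` is a substructure of `S2`: its interpretation consists exactly of the tuples of
`S2` all of whose elements belong to the support of `S1`. -/
def Substr (S1 S2 : Str Rel ar V) : Prop :=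
  ∀ r, S1.interp r = { t ∈ S2.interp r | ∀ i, t i ∈ S1.supp }

/-- Two elements touch iff they occur in a common tuple. -/
def Touching (S : Str Rel ar V) (u v : V) : Prop :=
  ∃ (r : Rel) (t : Fin (ar r) → V), t ∈ S.interp r ∧ (∃ i, t i = u) ∧ ∃ j, t j = v

/-- A structure is connected iff any two support elements are joined by a path of
pairwise overlapping tuples. -/
def ConnectedS (S : Str Rel ar V) : Prop :=
  ∀ u ∈ S.supp, ∀ v ∈ S.supp, Relation.ReflTransGen (Touching S) u v

/-- `S1` is a maximally connected substructure of `S2`. -/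
def MaxConn (S1 S2 : Str Rel ar V) : Prop :=
  Substr S1 S2 ∧ ConnectedS S1 ∧
    ∀ S1' : Str Rel ar V, Substr S1' S2 → ConnectedS S1' → Substr S1 S1' → S1 = S1'

/-- The set of maximally connected substructures of a structure. -/
def split (S : Str Rel ar V) : Set (Str Rel ar V) := { S' | MaxConn S' S }

/-- `split`, lifted to sets of structures. -/
def splitSet (𝒮 : Set (Str Rel ar V)) : Set (Str Rel ar V) := ⋃ S ∈ 𝒮, split S

/-- The smallest equivalence relation containing `R`. -/
def EqvOf (R : V → V → Prop) (a b : V) : Prop :=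
  ∀ E : V → V → Prop, Equivalence E → (∀ x y, R x y → E x y) → E a b

/-- An equivalence relation is compatible with a structure iff any two distinct tuples of
the interpretation of a relation symbol differ at some position modulo the relation. -/
def CompatibleE (S : Str Rel ar V) (E : V → V → Prop) : Prop :=
  ∀ r, ∀ t1 ∈ S.interp r, ∀ t2 ∈ S.interp r, t1 ≠ t2 → ∃ i, ¬ E (t1 i) (t2 i)

/-- The image of a structure under a map on elements. -/
def mapStr (h : V → V) (S : Str Rel ar V) : Str Rel ar V where
  interp r := (fun t => h ∘ t) '' S.interp r
  finite_interp r := (S.finite_interp r).image _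
  finite_active := by
    refine S.finite_active.subset ?_
    intro r hr
    simp only [Set.mem_setOf_eq, ne_eq] at hr ⊢
    intro h0
    exact hr (by rw [h0, Set.image_empty])

/-- `S'` is (a copy over `V` of) the quotient of `S` by the equivalence relation `E`. -/
def QuotBy (S : Str Rel ar V) (E : V → V → Prop) (S' : Str Rel ar V) : Prop :=
  ∃ h : V → V, (∀ u ∈ S.supp, ∀ v ∈ S.supp, (E u v ↔ h u = h v)) ∧ S' = mapStr h S

/-- `S'` is an isomorphic copy of `S` (over the same universe `V`). -/
def IsoCopy (S S' : Str Rel ar V) : Prop :=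
  ∃ h : V → V, Set.InjOn h S.supp ∧ S' = mapStr h S

/-- A matching: a set of pairs such that distinct pairs share no element. -/
def IsMatching (M : Set (V × V)) : Prop :=
  ∀ p ∈ M, ∀ q ∈ M, p ≠ q → ({p.1, p.2} ∩ {q.1, q.2} : Set V) = ∅

/-- The set of internal fusions of a structure: quotients by compatible equivalence
relations (up to isomorphism). -/
def IntFusion (S : Str Rel ar V) : Set (Str Rel ar V) :=
  { S' | ∃ E : V → V → Prop, Equivalence E ∧ CompatibleE S E ∧ QuotBy S E S' }

/-- Internal fusions of members of a set of structures. -/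
def ifSet (𝒮 : Set (Str Rel ar V)) : Set (Str Rel ar V) := ⋃ S ∈ 𝒮, IntFusion S

/-- Internal fusions of a rich canonical model: quotients by compatible equivalence
relations that do not violate the disequality relation `d`. -/
def SIntFusion (S : Str Rel ar V) (d : V → V → Prop) : Set (Str Rel ar V) :=
  { S' | ∃ E : V → V → Prop, Equivalence E ∧ CompatibleE S E ∧
      (∀ u v, d u v → ¬ E u v) ∧ QuotBy S E S' }

/-- External fusions of two structures: quotients of the composition of disjoint
isomorphic copies by the smallest equivalence relation containing a nonempty matching
between supports that is compatible with the composition. -/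
def ExtFusion (S1 S2 : Str Rel ar V) : Set (Str Rel ar V) :=
  { S' | ∃ (S1' S2' : Str Rel ar V) (M : Set (V × V)),
      IsoCopy S1 S1' ∧ IsoCopy S2 S2' ∧ S1'.supp ∩ S2'.supp = ∅ ∧
      M.Nonempty ∧ IsMatching M ∧ (∀ p ∈ M, p.1 ∈ S1'.supp ∧ p.2 ∈ S2'.supp) ∧
      CompatibleE (S1'.comp S2') (EqvOf fun a b => (a, b) ∈ M) ∧
      QuotBy (S1'.comp S2') (EqvOf fun a b => (a, b) ∈ M) S' }

/-- Single-pair external fusions: external fusions whose matching is a single pair. -/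
def ExtFusion1 (S1 S2 : Str Rel ar V) : Set (Str Rel ar V) :=
  { S' | ∃ (S1' S2' : Str Rel ar V) (M : Set (V × V)),
      IsoCopy S1 S1' ∧ IsoCopy S2 S2' ∧ S1'.supp ∩ S2'.supp = ∅ ∧
      (∃ p : V × V, M = {p}) ∧ IsMatching M ∧
      (∀ p ∈ M, p.1 ∈ S1'.supp ∧ p.2 ∈ S2'.supp) ∧
      CompatibleE (S1'.comp S2') (EqvOf fun a b => (a, b) ∈ M) ∧
      QuotBy (S1'.comp S2') (EqvOf fun a b => (a, b) ∈ M) S' }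

/-- Closure of a set of structures under external fusions (structures being identified
up to isomorphism). -/
inductive efStar (𝒮 : Set (Str Rel ar V)) : Str Rel ar V → Prop where
  | base {S : Str Rel ar V} : S ∈ 𝒮 → efStar 𝒮 S
  | iso {S S' : Str Rel ar V} : efStar 𝒮 S → IsoCopy S S' → efStar 𝒮 S'
  | fuse {S1 S2 S : Str Rel ar V} :
      efStar 𝒮 S1 → efStar 𝒮 S2 → S ∈ ExtFusion S1 S2 → efStar 𝒮 S

def efStarSet (𝒮 : Set (Str Rel ar V)) : Set (Str Rel ar V) := { S | efStar 𝒮 S }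

/-- Closure of a set of structures under single-pair external fusions. -/
inductive ef1Star (𝒮 : Set (Str Rel ar V)) : Str Rel ar V → Prop where
  | base {S : Str Rel ar V} : S ∈ 𝒮 → ef1Star 𝒮 S
  | iso {S S' : Str Rel ar V} : ef1Star 𝒮 S → IsoCopy S S' → ef1Star 𝒮 S'
  | fuse {S1 S2 S : Str Rel ar V} :
      ef1Star 𝒮 S1 → ef1Star 𝒮 S2 → S ∈ ExtFusion1 S1 S2 → ef1Star 𝒮 S

def ef1StarSet (𝒮 : Set (Str Rel ar V)) : Set (Str Rel ar V) := { S | ef1Star 𝒮 S }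

/-- Closure of a set of structures under both internal and external fusions. -/
inductive iefStar (𝒮 : Set (Str Rel ar V)) : Str Rel ar V → Prop where
  | base {S : Str Rel ar V} : S ∈ 𝒮 → iefStar 𝒮 S
  | iso {S S' : Str Rel ar V} : iefStar 𝒮 S → IsoCopy S S' → iefStar 𝒮 S'
  | fuse {S1 S2 S : Str Rel ar V} :
      iefStar 𝒮 S1 → iefStar 𝒮 S2 → S ∈ ExtFusion S1 S2 → iefStar 𝒮 S
  | intf {S1 S : Str Rel ar V} : iefStar 𝒮 S1 → S ∈ IntFusion S1 → iefStar 𝒮 S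

def iefStarSet (𝒮 : Set (Str Rel ar V)) : Set (Str Rel ar V) := { S | iefStar 𝒮 S }

/-- The color of an element: the set of relation symbols whose interpretation contains
the constant tuple at this element. -/
def color (S : Str Rel ar V) (u : V) : Set Rel :=
  { r : Rel | (fun _ => u) ∈ S.interp r }

/-- The multiplicity of a color in the multiset color abstraction of a structure. -/
noncomputable def colorMult (S : Str Rel ar V) (C : Set Rel) : ℕ :=
  {u ∈ S.supp | color S u = C}.ncard

/-- The `k`-multiset color abstraction of a structure: the sub-multisets of cardinality
at most `k` of the multiset of colors of its support elements. -/
noncomputable def MkOf (k : ℕ) (S : Str Rel ar V) : Set (Multiset (Set Rel)) :=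
  { M | Multiset.card M ≤ k ∧
      ∀ C : Set Rel, @Multiset.count _ (Classical.decEq _) C M ≤ colorMult S C }

/-- The `k`-multiset color abstraction, lifted to sets of structures. -/
noncomputable def MkSet (k : ℕ) (𝒮 : Set (Str Rel ar V)) : Set (Multiset (Set Rel)) :=
  ⋃ S ∈ 𝒮, MkOf k S

/-- A set of structures conforms to an RGB color scheme iff (1) in any member, if some
support element has a red color then all other support elements have blue colors, and
(2) in any external fusion of members, every green color occurs at most twice. -/
def Conforms (𝒮 : Set (Str Rel ar V)) (P : RGB Rel) : Prop :=
  (∀ S ∈ 𝒮, ∀ u ∈ S.supp, color S u ∈ P.red →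
      ∀ v ∈ S.supp, v ≠ u → color S v ∈ P.blue) ∧
  (∀ S ∈ efStarSet 𝒮, ∀ C ∈ P.green, colorMult S C ≤ 2)

/-- Type `R` structures: only blue and red colors, with exactly one red element. -/
def TypeR (P : RGB Rel) (S : Str Rel ar V) : Prop :=
  (∀ u ∈ S.supp, color S u ∈ P.blue ∨ color S u ∈ P.red) ∧
  {u ∈ S.supp | color S u ∈ P.red}.ncard = 1

/-- Type `G` structures: only blue and green colors, with at least one green element. -/
def TypeG (P : RGB Rel) (S : Str Rel ar V) : Prop :=
  (∀ u ∈ S.supp, color S u ∈ P.blue ∨ color S u ∈ P.green) ∧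
  {u ∈ S.supp | color S u ∈ P.green}.Nonempty

/-- Type `B` structures: only blue colors. -/
def TypeB (P : RGB Rel) (S : Str Rel ar V) : Prop :=
  ∀ u ∈ S.supp, color S u ∈ P.blue

namespace SID

/-- The set of predicate symbols occurring in an SID. -/
def predsOf (Δ : SID Rel ar Pr pa) : Set Pr :=
  {A | Δ.rules A ≠ ∅} ∪ ⋃ A, ⋃ φ ∈ Δ.rules A, SLR.preds φ

/-- The set of relation symbols occurring in an SID. -/
def relsOf (Δ : SID Rel ar Pr pa) : Set Rel :=
  ⋃ A, ⋃ φ ∈ Δ.rules A, SLR.rels φ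

/-- The number of predicate symbols occurring in an SID. -/
noncomputable def Pcount (Δ : SID Rel ar Pr pa) : ℕ := Δ.predsOf.ncard

/-- The number of relation symbols occurring in an SID. -/
noncomputable def Rcount (Δ : SID Rel ar Pr pa) : ℕ := Δ.relsOf.ncard

/-- The maximum number of variables (free or existentially quantified) occurring in a
rule of the SID. -/
noncomputable def maxvar (Δ : SID Rel ar Pr pa) : ℕ :=
  sSup { n | ∃ A, ∃ φ ∈ Δ.rules A, n = ({x | x < pa A} ∪ SLR.vars φ).ncard }

/-- The maximum number of predicate atoms occurring in a rule of the SID. -/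
noncomputable def maxpredatoms (Δ : SID Rel ar Pr pa) : ℕ :=
  sSup { n | ∃ A, ∃ φ ∈ Δ.rules A, n = SLR.npred φ }

/-- The maximum number of relation atoms occurring in a rule of the SID. -/
noncomputable def maxrelatoms (Δ : SID Rel ar Pr pa) : ℕ :=
  sSup { n | ∃ A, ∃ φ ∈ Δ.rules A, n = SLR.nrel φ }

/-- The maximum arity of a relation symbol occurring in the SID. -/
noncomputable def maxrelarity (Δ : SID Rel ar Pr pa) : ℕ :=
  sSup { n | ∃ r ∈ Δ.relsOf, n = ar r }

/-- The maximum arity of a predicate symbol occurring in the SID. -/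
noncomputable def maxpredarity (Δ : SID Rel ar Pr pa) : ℕ :=
  sSup { n | ∃ A ∈ Δ.predsOf, n = pa A }

/-- An SID is equality-free iff all its rules are equality-free. -/
def EqFree (Δ : SID Rel ar Pr pa) : Prop :=
  ∀ A, ∀ φ ∈ Δ.rules A, SLR.EqFreeF φ

end SID

/-- An SID is all-satisfiable for a nullary predicate `A` iff every predicate-free
outcome of a complete unfolding of `A` is satisfiable. -/
def AllSat (Δ : SID Rel ar Pr pa) (A : Pr) : Prop :=
  ∀ χ : SLR Rel ar Pr pa, Unfolds Δ (natom A) χ → χ.PredFree →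
    ∃ (S : Str Rel ar V) (s : ℕ → V), Sat Δ S s χ

/-- An SID is expandable for a nullary predicate `A`: any finite family of pairwise
disjoint canonical models embeds, as a substructure, into a rich canonical model, in a
way that neither disequalities nor overlapping tuples connect two distinct members. -/
def Expandable (Δ : SID Rel ar Pr pa) (A : Pr) : Prop :=
  ∀ (n : ℕ) (Ss : Fin n → Str Rel ar V),
    (∀ i, Ss i ∈ Canonical (V := V) Δ (natom A)) →
    (∀ i j, i ≠ j → (Ss i).supp ∩ (Ss j).supp = ∅) →
    ∃ (S : Str Rel ar V) (d : V → V → Prop),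
      RichCanonical Δ (natom A) S d ∧
      Substr (bigComp Ss) S ∧
      (∀ i j : Fin n, i < j → ∀ u ∈ (Ss i).supp, ∀ v ∈ (Ss j).supp, ¬ d u v) ∧
      ¬ ∃ (r : Rel) (t1 t2 : Fin (ar r) → V) (i j : Fin n),
          t1 ∈ S.interp r ∧ t2 ∈ S.interp r ∧ i < j ∧
          (∃ k, t1 k ∈ (Ss i).supp) ∧ (∃ k, t2 k ∈ (Ss j).supp) ∧ ∃ k l, t1 k = t2 l

/-- The set of structures obtained by internal fusion of rich canonical `Δ`-models. -/
def sifSet (Δ : SID Rel ar Pr pa) (φ : SLR Rel ar Pr pa) : Set (Str Rel ar V) :=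
  { S' | ∃ (S : Str Rel ar V) (d : V → V → Prop),
      RichCanonical Δ φ S d ∧ S' ∈ SIntFusion S d }

end Defs2

end SLRTW

namespace SLRTW

/-!
Every member of `ief*(C)` is the image `h(W)` of some `W ∈ ef*(C)` under a map `h` whose kernel
is compatible with `W`: internal fusions compose into `h`, and an external fusion of two such
images is obtained by gluing a single matched pair of representatives and letting `h` make the
remaining identifications.

It remains to bound `tw (h(W))`, by induction on the number of identifications `h` makes on the
support of `W`. If `h` identifies `a` and `b` from different components of `W`, glue a copy of
`W` to `W` at `a ↦ b` and move the component of `a` into the copy: `h(W)` becomes a substructure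
of a compatible image with one identification fewer. If `a` and `b` lie in one component `K`,
glue the copy along the swap of `a` and `b`; the copy of `K` bridges `a` and `b`, and contracting
it exhibits `h(W)` as a minor of a compatible image with one identification fewer. Minors do not
increase treewidth.
-/

theorem SimpleGraph.connected_induce_of_reflTransGen {ι α : Type*} {G : SimpleGraph ι}
    {N : α → Set ι} {R : α → α → Prop} {U : Set ι} {x₀ : α}
    (hN : ∀ x, Relation.ReflTransGen R x₀ x → (G.induce (N x)).Connected ∧ N x ⊆ U)
    (hR : ∀ x y, R x y → (N x ∩ N y).Nonempty)
    (hU : ∀ n ∈ U, ∃ x, Relation.ReflTransGen R x₀ x ∧ n ∈ N x) :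
    (G.induce U).Connected := by
  have patch : ∀ x, Relation.ReflTransGen R x₀ x →
      ∃ s ⊆ U, N x₀ ⊆ s ∧ N x ⊆ s ∧ (G.induce s).Connected := by
    intro x hx
    induction hx with
    | refl => exact ⟨N x₀, (hN x₀ .refl).2, le_rfl, le_rfl, (hN x₀ .refl).1⟩
    | @tail x y hx hxy ih =>
      obtain ⟨s, hsU, hs₀, hsx, hs⟩ := ih
      obtain ⟨hy, hyU⟩ := hN y (hx.tail hxy)
      refine ⟨s ∪ N y, Set.union_subset hsU hyU, hs₀.trans Set.subset_union_left,
        Set.subset_union_right, G.induce_union_connected hs.preconnected hy.preconnected ?_⟩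
      obtain ⟨n, hnx, hny⟩ := hR x y hxy
      exact ⟨n, hsx hnx, hny⟩
  obtain ⟨⟨u, hu⟩⟩ := (hN x₀ .refl).1.nonempty
  refine G.induce_connected_of_patches u ((hN x₀ .refl).2 hu) fun hv => ?_
  obtain ⟨x, hx, hvx⟩ := hU _ hv
  obtain ⟨s, hsU, hs₀, hsx, hs⟩ := patch x hx
  exact ⟨s, hsU, hs₀ hu, hsx hvx, hs.preconnected _ _⟩

section

variable {Rel : Type} {ar : Rel → ℕ} {V : Type}

theorem Str.ext {S1 S2 : Str Rel ar V} (h : ∀ r, S1.interp r = S2.interp r) : S1 = S2 := by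
  cases S1
  cases S2
  congr
  exact funext h

theorem Str.mem_supp {S : Str Rel ar V} {r : Rel} {t : Fin (ar r) → V} (ht : t ∈ S.interp r)
    (i : Fin (ar r)) : t i ∈ S.supp :=
  ⟨r, t, ht, i, rfl⟩

theorem Str.supp_finite (S : Str Rel ar V) : S.supp.Finite := by
  refine (S.finite_active.biUnion fun r _ =>
    (S.finite_interp r).biUnion fun t _ => Set.finite_range t).subset ?_
  rintro u ⟨r, t, ht, i, rfl⟩
  simp only [Set.mem_iUnion]
  exact ⟨r, Set.nonempty_iff_ne_empty.mp ⟨t, ht⟩, t, ht, i, rfl⟩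

theorem supp_mapStr (f : V → V) (S : Str Rel ar V) : (mapStr f S).supp = f '' S.supp := by
  ext u
  constructor
  · rintro ⟨r, _, ⟨t, ht, rfl⟩, i, rfl⟩
    exact ⟨t i, S.mem_supp ht i, rfl⟩
  · rintro ⟨_, ⟨r, t, ht, i, rfl⟩, rfl⟩
    exact ⟨r, f ∘ t, ⟨t, ht, rfl⟩, i, rfl⟩

theorem Str.supp_comp (S1 S2 : Str Rel ar V) : (S1.comp S2).supp = S1.supp ∪ S2.supp := by
  ext u
  constructor
  · rintro ⟨r, t, ht | ht, i, rfl⟩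
    exacts [Or.inl ⟨r, t, ht, i, rfl⟩, Or.inr ⟨r, t, ht, i, rfl⟩]
  · rintro (⟨r, t, ht, i, rfl⟩ | ⟨r, t, ht, i, rfl⟩)
    exacts [⟨r, t, Or.inl ht, i, rfl⟩, ⟨r, t, Or.inr ht, i, rfl⟩]

theorem mapStr_mapStr (f g : V → V) (S : Str Rel ar V) :
    mapStr f (mapStr g S) = mapStr (f ∘ g) S :=
  Str.ext fun r => (Set.image_image _ _ (S.interp r)).trans rfl

theorem mapStr_congr {f g : V → V} {S : Str Rel ar V} (h : Set.EqOn f g S.supp) :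
    mapStr f S = mapStr g S :=
  Str.ext fun _ => Set.image_congr fun _ ht => funext fun i => h (S.mem_supp ht i)

theorem mapStr_id (S : Str Rel ar V) : mapStr id S = S :=
  Str.ext fun _ => Set.image_id _

theorem mapStr_strComp (f : V → V) (S1 S2 : Str Rel ar V) :
    mapStr f (S1.comp S2) = (mapStr f S1).comp (mapStr f S2) :=
  Str.ext fun _ => Set.image_union _ _ _

theorem Touching.symm {S : Str Rel ar V} {u v : V} (h : Touching S u v) : Touching S v u :=
  let ⟨r, t, ht, hu, hv⟩ := h
  ⟨r, t, ht, hv, hu⟩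

theorem Touching.mem_supp_right {S : Str Rel ar V} {u v : V} (h : Touching S u v) :
    v ∈ S.supp :=
  let ⟨_, _, ht, _, j, hj⟩ := h
  hj ▸ S.mem_supp ht j

theorem Touching.mono {S S' : Str Rel ar V} (hSS' : ∀ r, S.interp r ⊆ S'.interp r) {u v : V}
    (h : Touching S u v) : Touching S' u v :=
  let ⟨r, t, ht, hu, hv⟩ := h
  ⟨r, t, hSS' r ht, hu, hv⟩

theorem Touching.mapStr {S : Str Rel ar V} {u v : V} (f : V → V) (h : Touching S u v) :
    Touching (mapStr f S) (f u) (f v) :=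
  let ⟨r, t, ht, ⟨i, hi⟩, ⟨j, hj⟩⟩ := h
  ⟨r, f ∘ t, ⟨t, ht, rfl⟩, ⟨i, by simp [hi]⟩, ⟨j, by simp [hj]⟩⟩

theorem Str.mem_supp_of_reflTransGen (S : Str Rel ar V) {a c : V} (ha : a ∈ S.supp)
    (hac : Relation.ReflTransGen (Touching S) a c) : c ∈ S.supp := by
  rcases hac.cases_tail with rfl | ⟨_, _, hc⟩
  exacts [ha, hc.mem_supp_right]

theorem reflTransGen_touching_of_mem_interp {S : Str Rel ar V} {u : V} {r : Rel}
    {t : Fin (ar r) → V} (ht : t ∈ S.interp r) {i : Fin (ar r)}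
    (hi : Relation.ReflTransGen (Touching S) u (t i)) (j : Fin (ar r)) :
    Relation.ReflTransGen (Touching S) u (t j) :=
  hi.tail ⟨r, t, ht, ⟨i, rfl⟩, ⟨j, rfl⟩⟩

noncomputable def TreeDecomp.single (S : Str Rel ar V) : TreeDecomp S where
  ι := Unit
  instFin := inferInstance
  G := ⊥
  isTree := .of_subsingleton
  bag _ := S.supp_finite.toFinset
  bag_cover _ _ ht := ⟨(), fun i => S.supp_finite.mem_toFinset.mpr (S.mem_supp ht i)⟩
  bag_conn u hu := by
    have : Nonempty {n : Unit | u ∈ S.supp_finite.toFinset} :=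
      ⟨⟨(), S.supp_finite.mem_toFinset.mpr hu⟩⟩
    exact .of_subsingleton

theorem tw_le_width {S : Str Rel ar V} (T : TreeDecomp S) : tw S ≤ T.width :=
  Nat.sInf_le ⟨T, rfl⟩

theorem exists_treeDecomp_width_eq_tw (S : Str Rel ar V) : ∃ T : TreeDecomp S, T.width = tw S :=
  Nat.sInf_mem (s := {w | ∃ T : TreeDecomp S, T.width = w}) ⟨_, TreeDecomp.single S, rfl⟩

def TouchingIn (S : Str Rel ar V) (A : Set V) (c d : V) : Prop :=
  c ∈ A ∧ d ∈ A ∧ Touching S c d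

def FibersConnected (X : Str Rel ar V) (F : V → V) : Prop :=
  ∀ x ∈ X.supp, ∀ y ∈ X.supp, F x = F y → Relation.ReflTransGen (TouchingIn X (F ⁻¹' {F x})) x y

def IsMinor (S X : Str Rel ar V) : Prop :=
  ∃ F : V → V, FibersConnected X F ∧ ∀ r, S.interp r ⊆ (mapStr F X).interp r

theorem TreeDecomp.connected_induce_image {X : Str Rel ar V} [DecidableEq V]
    [DecidablePred (· ∈ X.supp)] (T : TreeDecomp X) {F : V → V}
    (hF : FibersConnected X F)
    {x₀ : V} (hx₀ : x₀ ∈ X.supp) :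
    (T.G.induce {n | F x₀ ∈ ((T.bag n).filter (· ∈ X.supp)).image F}).Connected := by
  have hchain : ∀ x, Relation.ReflTransGen (TouchingIn X (F ⁻¹' {F x₀})) x₀ x →
      x ∈ X.supp ∧ F x = F x₀ := by
    intro x hx
    induction hx with
    | refl => exact ⟨hx₀, rfl⟩
    | tail _ hxy => exact ⟨hxy.2.2.mem_supp_right, hxy.2.1⟩
  refine SimpleGraph.connected_induce_of_reflTransGen (N := fun x => {n | x ∈ T.bag n})
    (fun x hx => ⟨T.bag_conn x (hchain x hx).1, fun n hn => ?_⟩) ?_ ?_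
  · simp only [Set.mem_ofPred_eq, Finset.mem_image, Finset.mem_filter]
    exact ⟨x, ⟨hn, (hchain x hx).1⟩, (hchain x hx).2⟩
  · rintro x y ⟨-, -, r, t, ht, ⟨i, rfl⟩, ⟨j, rfl⟩⟩
    obtain ⟨n, hn⟩ := T.bag_cover r t ht
    exact ⟨n, hn i, hn j⟩
  · intro n hn
    simp only [Set.mem_ofPred_eq, Finset.mem_image, Finset.mem_filter] at hn
    obtain ⟨x, ⟨hxn, hx⟩, hFx⟩ := hn
    exact ⟨x, hFx ▸ hF x₀ hx₀ x hx hFx.symm, hxn⟩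

theorem IsMinor.tw_le {S X : Str Rel ar V} (h : IsMinor S X) : tw S ≤ tw X := by
  classical
  obtain ⟨F, hF, hSX⟩ := h
  obtain ⟨T, hT⟩ := exists_treeDecomp_width_eq_tw X
  let T' : TreeDecomp S :=
    { ι := T.ι
      instFin := T.instFin
      G := T.G
      isTree := T.isTree
      bag := fun n => ((T.bag n).filter (· ∈ X.supp)).image F
      bag_cover := by
        intro r _ ht
        obtain ⟨t, htX, rfl⟩ := hSX r ht
        obtain ⟨n, hn⟩ := T.bag_cover r t htX
        exact ⟨n, fun i => Finset.mem_image_of_mem F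
          (Finset.mem_filter.mpr ⟨hn i, X.mem_supp htX i⟩)⟩
      bag_conn := by
        rintro _ ⟨r, _, ht, i, rfl⟩
        obtain ⟨t, htX, rfl⟩ := hSX r ht
        exact T.connected_induce_image hF (X.mem_supp htX i) }
  have hwidth : T'.width ≤ T.width :=
    Nat.sub_le_sub_right (Finset.sup_mono_fun fun n _ =>
      Finset.card_image_le.trans (Finset.card_filter_le _ _)) 1
  exact (tw_le_width T').trans (hwidth.trans hT.le)

theorem isMinor_of_subset {S X : Str Rel ar V} (h : ∀ r, S.interp r ⊆ X.interp r) :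
    IsMinor S X :=
  ⟨id, fun _ _ _ _ hxy => by obtain rfl : _ = _ := hxy; exact .refl, by rwa [mapStr_id]⟩

theorem isMinor_mapStr_of_injOn {X : Str Rel ar V} {F : V → V} (hF : Set.InjOn F X.supp) :
    IsMinor (mapStr F X) X :=
  ⟨F, fun _ hx _ hy hxy => hF hx hy hxy ▸ .refl, fun _ => le_rfl⟩

def TouchConnected (S : Str Rel ar V) (A : Set V) : Prop :=
  ∀ x ∈ A, ∀ y ∈ A, Relation.ReflTransGen (TouchingIn S A) x y

theorem isMinor_contract {S X : Str Rel ar V} {A : Set V} [DecidablePred (· ∈ A)] {p : V}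
    (hp : p ∈ A) (hA : TouchConnected X A)
    (hS : ∀ r, S.interp r ⊆ (mapStr (fun z => if z ∈ A then p else z) X).interp r) :
    IsMinor S X := by
  refine ⟨fun z => if z ∈ A then p else z, fun x _ y _ hxy => ?_, hS⟩
  by_cases hx : x ∈ A <;> by_cases hy : y ∈ A <;> simp only [hx, hy, if_true, if_false] at hxy
  · refine Relation.ReflTransGen.mono (fun c d hcd => ⟨?_, ?_, hcd.2.2⟩) _ _ (hA x hx y hy) <;>
      simp [hx, hcd.1, hcd.2.1]
  · exact absurd (hxy ▸ hp) hy
  · exact absurd (hxy ▸ hp) hx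
  · exact hxy ▸ .refl

/-- The kernel of `h` is compatible with `S`. -/
def CompatibleMap (S : Str Rel ar V) (h : V → V) : Prop :=
  ∀ r, Set.InjOn (fun t => h ∘ t) (S.interp r)

theorem LocDisj.ne {S1 S2 : Str Rel ar V} (hS : LocDisj S1 S2) {r : Rel}
    {t s : Fin (ar r) → V} (ht : t ∈ S1.interp r) (hs : s ∈ S2.interp r) : t ≠ s :=
  fun hts => (Set.eq_empty_iff_forall_notMem.mp (hS r)) t ⟨ht, hts ▸ hs⟩

theorem compatibleMap_of_injOn {S : Str Rel ar V} {h : V → V} (hh : Set.InjOn h S.supp) :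
    CompatibleMap S h :=
  fun _ _ ht _ hs hts => funext fun i => hh (S.mem_supp ht i) (S.mem_supp hs i) (congrFun hts i)

theorem CompatibleMap.of_comp_eq {S : Str Rel ar V} {h f G : V → V} (hh : CompatibleMap S h)
    (hf : ∀ x ∈ S.supp, G (f x) = h x) : CompatibleMap S f :=
  fun r _ ht _ hs hts => hh r ht hs <| funext fun i => by
    change h _ = h _
    rw [← hf _ (S.mem_supp ht i), ← hf _ (S.mem_supp hs i)]
    exact congrArg G (congrFun hts i)

theorem CompatibleMap.comp {S : Str Rel ar V} {h g : V → V} (hh : CompatibleMap S h)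
    (hg : CompatibleMap (mapStr h S) g) : CompatibleMap S (g ∘ h) :=
  fun r t ht s hs hts => hh r ht hs (hg r ⟨t, ht, rfl⟩ ⟨s, hs, rfl⟩ hts)

theorem CompatibleMap.mono {S S' : Str Rel ar V} {h : V → V}
    (hSS' : ∀ r, S.interp r ⊆ S'.interp r) (hh : CompatibleMap S' h) : CompatibleMap S h :=
  fun r => (hh r).mono (hSS' r)

theorem compatibleMap_mapStr {S : Str Rel ar V} {h σ : V → V} (hh : CompatibleMap S (h ∘ σ)) :
    CompatibleMap (mapStr σ S) h := by
  rintro r _ ⟨t, ht, rfl⟩ _ ⟨s, hs, rfl⟩ hts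
  rw [hh r ht hs hts]

theorem CompatibleMap.strComp {S1 S2 : Str Rel ar V} {h : V → V} (h1 : CompatibleMap S1 h)
    (h2 : CompatibleMap S2 h) (hdisj : LocDisj (mapStr h S1) (mapStr h S2)) :
    CompatibleMap (S1.comp S2) h := by
  rintro r t (ht | ht) s (hs | hs) hts
  · exact h1 r ht hs hts
  · exact absurd hts (hdisj.ne ⟨t, ht, rfl⟩ ⟨s, hs, rfl⟩)
  · exact absurd hts.symm (hdisj.ne ⟨s, hs, rfl⟩ ⟨t, ht, rfl⟩)
  · exact h2 r ht hs hts

theorem compatibleE_iff_compatibleMap {S : Str Rel ar V} {E : V → V → Prop} {g : V → V}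
    (hg : ∀ u ∈ S.supp, ∀ v ∈ S.supp, E u v ↔ g u = g v) :
    CompatibleE S E ↔ CompatibleMap S g := by
  constructor
  · intro hE r t ht s hs hts
    by_contra hne
    obtain ⟨i, hi⟩ := hE r t ht s hs hne
    exact hi ((hg _ (S.mem_supp ht i) _ (S.mem_supp hs i)).mpr (congrFun hts i))
  · intro hc r t ht s hs hne
    by_contra! hall
    exact hne (hc r ht hs (funext fun i =>
      (hg _ (S.mem_supp ht i) _ (S.mem_supp hs i)).mp (hall i)))

theorem exists_injOn_forall_notMem [Infinite V] {s t : Set V} (hs : s.Finite) (ht : t.Finite) :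
    ∃ β : V → V, Set.InjOn β s ∧ ∀ x ∈ s, β x ∉ t := by
  obtain ⟨β, hβt, hβ⟩ :=
    hs.exists_injOn_of_encard_le (t := tᶜ) (by simp [ht.infinite_compl.encard_eq])
  exact ⟨β, hβ, fun x hx => hβt hx⟩

theorem exists_injOn_extend [Infinite V] {s t P : Set V} {τ : V → V} (hs : s.Finite)
    (ht : t.Finite) (hτ : Set.InjOn τ P) (hτt : Set.MapsTo τ P t) :
    ∃ σ : V → V, Set.InjOn σ s ∧ Set.EqOn σ τ P ∧ ∀ x ∈ s, x ∉ P → σ x ∉ t := by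
  classical
  obtain ⟨β, hβ, hβt⟩ := exists_injOn_forall_notMem hs ht
  refine ⟨P.piecewise τ β, fun x hx y hy hxy => ?_, Set.piecewise_eqOn P τ β,
    fun x hx hxP => by rw [Set.piecewise_eq_of_notMem _ _ _ hxP]; exact hβt x hx⟩
  by_cases hxP : x ∈ P <;> by_cases hyP : y ∈ P <;>
    simp only [Set.piecewise_eq_of_mem, Set.piecewise_eq_of_notMem, hxP, hyP,
      not_false_eq_true] at hxy
  · exact hτ hxP hyP hxy
  · exact absurd (hxy ▸ hτt hxP) (hβt y hy)
  · exact absurd (hxy ▸ hτt hyP) (hβt x hx)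
  · exact hβ hx hy hxy

theorem exists_eqOn_of_injOn [Nonempty V] {s t : Set V} {σ f g : V → V} (hσ : Set.InjOn σ t)
    (hfg : ∀ v ∈ t, σ v ∈ s → f (σ v) = g v) :
    ∃ H : V → V, Set.EqOn H f s ∧ ∀ v ∈ t, H (σ v) = g v := by
  classical
  refine ⟨fun x => if x ∈ s then f x else g (Function.invFunOn σ t x), fun x hx => if_pos hx,
    fun v hv => ?_⟩
  dsimp only
  split_ifs with h
  · exact hfg v hv h
  · rw [hσ.leftInvOn_invFunOn hv]

def glueMatching (S1 S2 : Str Rel ar V) (σ β : V → V) : Set (V × V) :=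
  (fun v => (σ v, β v)) '' {v ∈ S2.supp | σ v ∈ S1.supp}

theorem isMatching_glueMatching {S1 S2 : Str Rel ar V} {σ β : V → V}
    (hσ : Set.InjOn σ S2.supp) (hβ : Set.InjOn β S2.supp) (hβS1 : ∀ x ∈ S2.supp, β x ∉ S1.supp) :
    IsMatching (glueMatching S1 S2 σ β) := by
  rintro _ ⟨x, ⟨hx, hσx⟩, rfl⟩ _ ⟨y, ⟨hy, hσy⟩, rfl⟩ hne
  have hxy : x ≠ y := fun h => hne (h ▸ rfl)
  refine Set.eq_empty_iff_forall_notMem.mpr fun z ⟨hzx, hzy⟩ => ?_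
  simp only [Set.mem_insert_iff, Set.mem_singleton_iff] at hzx hzy
  rcases hzx with rfl | rfl <;> rcases hzy with hzy | hzy
  · exact hxy (hσ hx hy hzy)
  · exact hβS1 y hy (by rw [← hzy]; exact hσx)
  · exact hβS1 x hx (by rw [hzy]; exact hσy)
  · exact hxy (hβ hx hy hzy)

theorem eqvOf_glueMatching_iff {S1 S2 : Str Rel ar V} {σ β g : V → V}
    (hσ : Set.InjOn σ S2.supp) (hg1 : Set.EqOn g id S1.supp)
    (hgβ : ∀ v ∈ S2.supp, g (β v) = σ v) {u v : V} (hu : u ∈ S1.supp ∪ β '' S2.supp)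
    (hv : v ∈ S1.supp ∪ β '' S2.supp) :
    EqvOf (fun a b => (a, b) ∈ glueMatching S1 S2 σ β) u v ↔ g u = g v := by
  refine ⟨fun huv => huv (fun x y => g x = g y) ⟨fun _ => rfl, Eq.symm, Eq.trans⟩ ?_,
    fun huv => ?_⟩
  · rintro _ _ ⟨w, ⟨hw, hσw⟩, hpair⟩
    obtain ⟨rfl, rfl⟩ := Prod.mk.inj hpair
    exact (hg1 hσw).trans (hgβ w hw).symm
  rcases hu with hu | ⟨x, hx, rfl⟩ <;> rcases hv with hv | ⟨y, hy, rfl⟩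
  · obtain rfl : u = v := (hg1 hu).symm.trans (huv.trans (hg1 hv))
    exact fun _ hE _ => hE.refl u
  · rw [hg1 hu, hgβ y hy] at huv
    subst huv
    exact fun _ _ hR => hR _ _ ⟨y, ⟨hy, hu⟩, rfl⟩
  · rw [hg1 hv, hgβ x hx] at huv
    subst huv
    exact fun _ hE hR => hE.symm (hR _ _ ⟨x, ⟨hx, hv⟩, rfl⟩)
  · rw [hgβ x hx, hgβ y hy] at huv
    exact hσ hx hy huv ▸ fun _ hE _ => hE.refl _

theorem comp_mapStr_mem_extFusion [Infinite V] {S1 S2 : Str Rel ar V} {σ : V → V}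
    (hσ : Set.InjOn σ S2.supp) (hglue : ∃ v ∈ S2.supp, σ v ∈ S1.supp)
    (hdisj : LocDisj S1 (mapStr σ S2)) : S1.comp (mapStr σ S2) ∈ ExtFusion S1 S2 := by
  obtain ⟨β, hβ, hβS1⟩ := exists_injOn_forall_notMem S2.supp_finite S1.supp_finite
  obtain ⟨g, hg1, hgβ⟩ := exists_eqOn_of_injOn (s := S1.supp) (f := id) (g := σ) hβ
    fun v hv hβv => absurd hβv (hβS1 v hv)
  have hS1 : mapStr g S1 = S1 := (mapStr_congr hg1).trans (mapStr_id S1)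
  have hS2 : mapStr g (mapStr β S2) = mapStr σ S2 :=
    (mapStr_mapStr g β S2).trans (mapStr_congr hgβ)
  have hiff : ∀ u ∈ (S1.comp (mapStr β S2)).supp, ∀ v ∈ (S1.comp (mapStr β S2)).supp,
      EqvOf (fun a b => (a, b) ∈ glueMatching S1 S2 σ β) u v ↔ g u = g v := by
    simp only [Str.supp_comp, supp_mapStr]
    exact fun u hu v hv => eqvOf_glueMatching_iff hσ hg1 hgβ hu hv
  have hcompat : CompatibleMap (S1.comp (mapStr β S2)) g :=
    CompatibleMap.strComp (compatibleMap_of_injOn ((Set.injOn_id _).congr hg1.symm))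
      (compatibleMap_mapStr (compatibleMap_of_injOn (hσ.congr fun v hv => (hgβ v hv).symm)))
      (by rwa [hS1, hS2])
  obtain ⟨v, hv, hσv⟩ := hglue
  refine ⟨S1, mapStr β S2, glueMatching S1 S2 σ β, ⟨id, Set.injOn_id _, (mapStr_id S1).symm⟩,
    ⟨β, hβ, rfl⟩, ?_, ⟨_, v, ⟨hv, hσv⟩, rfl⟩, isMatching_glueMatching hσ hβ hβS1, ?_,
    (compatibleE_iff_compatibleMap hiff).mpr hcompat, g, hiff, by rw [mapStr_strComp, hS1, hS2]⟩
  · rw [supp_mapStr]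
    exact Set.eq_empty_iff_forall_notMem.mpr fun _ ⟨hx, y, hy, hyx⟩ => hβS1 y hy (hyx ▸ hx)
  · rintro _ ⟨x, ⟨hx, hσx⟩, rfl⟩
    exact ⟨hσx, by rw [supp_mapStr]; exact ⟨x, hx, rfl⟩⟩

theorem exists_mem_extFusion_glue [Infinite V] {S1 S2 : Str Rel ar V} {P : Set V}
    {τ f1 f2 : V → V} (hP : P.Nonempty) (hPS2 : P ⊆ S2.supp) (hτ : Set.InjOn τ P)
    (hτS1 : Set.MapsTo τ P S1.supp) (hf : ∀ v ∈ P, f1 (τ v) = f2 v)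
    (h1 : CompatibleMap S1 f1) (h2 : CompatibleMap S2 f2)
    (hdisj : LocDisj (mapStr f1 S1) (mapStr f2 S2)) :
    ∃ W H, W ∈ ExtFusion S1 S2 ∧ CompatibleMap W H ∧
      mapStr H W = (mapStr f1 S1).comp (mapStr f2 S2) ∧
      W.supp.ncard + P.ncard = S1.supp.ncard + S2.supp.ncard := by
  obtain ⟨σ, hσ, hστ, hσS1⟩ := exists_injOn_extend S2.supp_finite S1.supp_finite hτ hτS1
  have hmem : ∀ v ∈ S2.supp, σ v ∈ S1.supp → v ∈ P :=
    fun v hv h => by_contra fun hvP => hσS1 v hv hvP h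
  obtain ⟨H, hH1, hHσ⟩ := exists_eqOn_of_injOn (f := f1) (g := f2) hσ
    fun v hv h => by rw [hστ (hmem v hv h)]; exact hf v (hmem v hv h)
  have hmap1 : mapStr H S1 = mapStr f1 S1 := mapStr_congr hH1
  have hmap2 : mapStr H (mapStr σ S2) = mapStr f2 S2 :=
    (mapStr_mapStr H σ S2).trans (mapStr_congr hHσ)
  have hinter : S1.supp ∩ σ '' S2.supp = τ '' P := by
    ext x
    constructor
    · rintro ⟨hx, v, hv, rfl⟩
      exact ⟨v, hmem v hv hx, (hστ (hmem v hv hx)).symm⟩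
    · rintro ⟨v, hv, rfl⟩
      exact ⟨hτS1 hv, v, hPS2 hv, hστ hv⟩
  refine ⟨S1.comp (mapStr σ S2), H, comp_mapStr_mem_extFusion hσ ?_ ?_, ?_,
    by rw [mapStr_strComp, hmap1, hmap2], ?_⟩
  · obtain ⟨v, hv⟩ := hP
    exact ⟨v, hPS2 hv, hστ hv ▸ hτS1 hv⟩
  · refine fun r => Set.eq_empty_iff_forall_notMem.mpr ?_
    rintro _ ⟨ht, s, hs, rfl⟩
    refine hdisj.ne ⟨_, ht, rfl⟩ ⟨s, hs, rfl⟩ (funext fun i => ?_)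
    have hi : s i ∈ P := hmem _ (S2.mem_supp hs i) (S1.mem_supp ht i)
    change f1 (σ (s i)) = f2 (s i)
    rw [hστ hi, hf _ hi]
  · exact CompatibleMap.strComp (h1.of_comp_eq (G := id) hH1)
      (compatibleMap_mapStr (h2.of_comp_eq (G := id) hHσ)) (by rwa [hmap1, hmap2])
  · rw [Str.supp_comp, supp_mapStr, ← hσ.ncard_image, ← hτ.ncard_image, ← hinter]
    exact Set.ncard_union_add_ncard_inter _ _ S1.supp_finite (S2.supp_finite.image σ)

/-- Only one matched pair is glued; the map performs the other identifications. -/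
theorem exists_efStar_of_mem_extFusion [Infinite V] (har : ∀ r, 1 ≤ ar r)
    {C : Set (Str Rel ar V)} {W1 W2 S : Str Rel ar V} {h1 h2 : V → V} (hW1 : efStar C W1)
    (hW2 : efStar C W2) (hh1 : CompatibleMap W1 h1) (hh2 : CompatibleMap W2 h2)
    (hS : S ∈ ExtFusion (mapStr h1 W1) (mapStr h2 W2)) :
    ∃ W h, efStar C W ∧ CompatibleMap W h ∧ S = mapStr h W := by
  obtain ⟨T1, T2, M, ⟨σ1, hσ1, rfl⟩, ⟨σ2, hσ2, rfl⟩, hdisj, ⟨⟨u, v⟩, huv⟩, -, hM, hcompat,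
    g, hg, rfl⟩ := hS
  have hg' : CompatibleMap _ g := (compatibleE_iff_compatibleMap hg).mp hcompat
  have hT1 : mapStr (g ∘ σ1 ∘ h1) W1 = mapStr g (mapStr σ1 (mapStr h1 W1)) := by
    rw [mapStr_mapStr, mapStr_mapStr]; rfl
  have hT2 : mapStr (g ∘ σ2 ∘ h2) W2 = mapStr g (mapStr σ2 (mapStr h2 W2)) := by
    rw [mapStr_mapStr, mapStr_mapStr]; rfl
  have hc1 : CompatibleMap W1 (g ∘ σ1 ∘ h1) := (hh1.comp (compatibleMap_of_injOn hσ1)).comp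
    (by rw [← mapStr_mapStr]; exact hg'.mono fun _ => Set.subset_union_left)
  have hc2 : CompatibleMap W2 (g ∘ σ2 ∘ h2) := (hh2.comp (compatibleMap_of_injOn hσ2)).comp
    (by rw [← mapStr_mapStr]; exact hg'.mono fun _ => Set.subset_union_right)
  have hld : LocDisj (mapStr (g ∘ σ1 ∘ h1) W1) (mapStr (g ∘ σ2 ∘ h2) W2) := by
    rw [hT1, hT2]
    refine fun r => Set.eq_empty_iff_forall_notMem.mpr ?_
    rintro _ ⟨⟨x, hx, rfl⟩, y, hy, hxy⟩
    have := hg' r (Or.inr hy) (Or.inl hx) hxy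
    subst this
    exact (Set.eq_empty_iff_forall_notMem.mp hdisj) _
      ⟨Str.mem_supp hx ⟨0, har r⟩, Str.mem_supp hy ⟨0, har r⟩⟩
  obtain ⟨hu, hv⟩ := hM _ huv
  have hguv : g u = g v := (hg u (by rw [Str.supp_comp]; exact Or.inl hu) v
    (by rw [Str.supp_comp]; exact Or.inr hv)).mp fun _ _ hR => hR _ _ huv
  rw [supp_mapStr, supp_mapStr] at hu hv
  obtain ⟨_, ⟨u₁, hu₁, rfl⟩, rfl⟩ := hu
  obtain ⟨_, ⟨v₁, hv₁, rfl⟩, rfl⟩ := hv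
  obtain ⟨W, H, hW, hH, hmap, -⟩ := exists_mem_extFusion_glue (P := {v₁}) (τ := fun _ => u₁)
    ⟨v₁, rfl⟩ (Set.singleton_subset_iff.mpr hv₁) (Set.injOn_singleton _ _) (fun _ _ => hu₁)
    (fun _ hv => hv ▸ hguv) hc1 hc2 hld
  exact ⟨W, H, .fuse hW1 hW2 hW, hH, by rw [hmap, hT1, hT2, mapStr_strComp]⟩

theorem exists_efStar_of_iefStar [Infinite V] (har : ∀ r, 1 ≤ ar r) {C : Set (Str Rel ar V)}
    {S : Str Rel ar V} (hS : iefStar C S) :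
    ∃ W h, efStar C W ∧ CompatibleMap W h ∧ S = mapStr h W := by
  induction hS with
  | base hS => exact ⟨_, id, .base hS, compatibleMap_of_injOn (Set.injOn_id _), (mapStr_id _).symm⟩
  | iso _ hiso ih =>
    obtain ⟨W, h, hW, hh, rfl⟩ := ih
    obtain ⟨f, hf, rfl⟩ := hiso
    exact ⟨W, f ∘ h, hW, hh.comp (compatibleMap_of_injOn hf), mapStr_mapStr f h W⟩
  | intf _ hint ih =>
    obtain ⟨W, h, hW, hh, rfl⟩ := ih
    obtain ⟨E, -, hE, g, hg, rfl⟩ := hint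
    exact ⟨W, g ∘ h, hW, hh.comp ((compatibleE_iff_compatibleMap hg).mp hE), mapStr_mapStr g h W⟩
  | fuse _ _ hfuse ih1 ih2 =>
    obtain ⟨W1, h1, hW1, hh1, rfl⟩ := ih1
    obtain ⟨W2, h2, hW2, hh2, rfl⟩ := ih2
    exact exists_efStar_of_mem_extFusion har hW1 hW2 hh1 hh2 hfuse

noncomputable def mergeDefect (W : Str Rel ar V) (h : V → V) : ℕ :=
  W.supp.ncard - (h '' W.supp).ncard

theorem ncard_image_lt_of_ne {s : Set V} (hs : s.Finite) {f : V → V} {a b : V} (ha : a ∈ s)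
    (hb : b ∈ s) (hab : a ≠ b) (hf : f a = f b) : (f '' s).ncard < s.ncard :=
  (Set.ncard_image_le hs).lt_of_ne fun h => hab (Set.injOn_of_ncard_image_eq h hs ha hb hf)

theorem exists_fresh_values [Infinite V] (W : Str Rel ar V) (h : V → V) :
    ∃ β G : V → V, Set.InjOn β W.supp ∧ (∀ x ∈ W.supp, β x ∉ h '' W.supp) ∧
      (∀ x ∈ W.supp, G (h x) = h x) ∧ ∀ x ∈ W.supp, G (β x) = h x := by
  obtain ⟨β, hβ, hβh⟩ := exists_injOn_forall_notMem W.supp_finite (W.supp_finite.image h)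
  obtain ⟨G, hGh, hGβ⟩ := exists_eqOn_of_injOn (s := h '' W.supp) (f := id) (g := h) hβ
    fun x hx hβx => absurd hβx (hβh x hx)
  exact ⟨β, G, hβ, hβh, fun x hx => hGh ⟨x, hx, rfl⟩, hGβ⟩

theorem exists_efStar_selfGlue [Infinite V] (har : ∀ r, 1 ≤ ar r) {C : Set (Str Rel ar V)}
    {W : Str Rel ar V} {h f1 f2 G τ : V → V} {P : Set V} (hW : efStar C W)
    (hh : CompatibleMap W h) (hG1 : ∀ x ∈ W.supp, G (f1 x) = h x)
    (hG2 : ∀ x ∈ W.supp, G (f2 x) = h x) (hne : ∀ x ∈ W.supp, f1 x ≠ f2 x)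
    (hP : P.Nonempty) (hPW : P ⊆ W.supp) (hτ : Set.InjOn τ P) (hτW : Set.MapsTo τ P W.supp)
    (hf : ∀ v ∈ P, f1 (τ v) = f2 v) :
    ∃ W' H, efStar C W' ∧ CompatibleMap W' H ∧
      mapStr H W' = (mapStr f1 W).comp (mapStr f2 W) ∧
      W'.supp.ncard + P.ncard = 2 * W.supp.ncard := by
  -- `f1` and `f2` both refine `h`, so a common tuple would come from a single tuple of `W`,
  -- on whose entries `f1` and `f2` differ.
  have hdisj : LocDisj (mapStr f1 W) (mapStr f2 W) := by
    refine fun r => Set.eq_empty_iff_forall_notMem.mpr ?_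
    rintro _ ⟨⟨t, ht, rfl⟩, s, hs, hst⟩
    obtain rfl : t = s := hh r ht hs <| funext fun i => by
      change h _ = h _
      rw [← hG1 _ (W.mem_supp ht i), ← hG2 _ (W.mem_supp hs i)]
      exact congrArg G (congrFun hst i).symm
    exact hne _ (W.mem_supp ht ⟨0, har r⟩) (congrFun hst ⟨0, har r⟩).symm
  obtain ⟨W', H, hW', hH, hmap, hcard⟩ := exists_mem_extFusion_glue hP hPW hτ hτW hf
    (hh.of_comp_eq hG1) (hh.of_comp_eq hG2) hdisj
  exact ⟨W', H, .fuse hW hW hW', hH, hmap, by omega⟩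

theorem exists_efStar_relocateGlue [Infinite V] (har : ∀ r, 1 ≤ ar r)
    {C : Set (Str Rel ar V)} {W : Str Rel ar V} {h β G : V → V} (hW : efStar C W)
    (hh : CompatibleMap W h) (hβh : ∀ x ∈ W.supp, β x ∉ h '' W.supp)
    (hGh : ∀ x ∈ W.supp, G (h x) = h x) (hGβ : ∀ x ∈ W.supp, G (β x) = h x)
    {K : Set V} [DecidablePred (· ∈ K)] {a b : V} (ha : a ∈ W.supp) (hb : b ∈ W.supp)
    (hhab : h a = h b) (haK : a ∈ K) (hbK : b ∉ K) :
    ∃ W' H, efStar C W' ∧ CompatibleMap W' H ∧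
      mapStr H W' = (mapStr (K.piecewise β h) W).comp (mapStr (K.piecewise h β) W) ∧
      W'.supp.ncard + 1 = 2 * W.supp.ncard := by
  have hβne : ∀ x ∈ W.supp, β x ≠ h x := fun x hx e => hβh x hx ⟨x, hx, e.symm⟩
  obtain ⟨W', H, hW', hH, hmap, hcard⟩ := exists_efStar_selfGlue
    (f1 := K.piecewise β h) (f2 := K.piecewise h β) (G := G) (P := {a}) (τ := fun _ => b) har hW hh
    (fun x hx => by by_cases hxK : x ∈ K <;> simp [Set.piecewise, hxK, hGh x hx, hGβ x hx])
    (fun x hx => by by_cases hxK : x ∈ K <;> simp [Set.piecewise, hxK, hGh x hx, hGβ x hx])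
    (fun x hx => by
      by_cases hxK : x ∈ K <;> simp [Set.piecewise, hxK, hβne x hx, (hβne x hx).symm])
    ⟨a, rfl⟩ (Set.singleton_subset_iff.mpr ha) (Set.injOn_singleton _ _) (fun _ _ => hb)
    (fun _ hv => by rw [hv]; simp [Set.piecewise, haK, hbK, hhab])
  exact ⟨W', H, hW', hH, hmap, by rwa [Set.ncard_singleton] at hcard⟩

theorem exists_efStar_swapGlue [Infinite V] [DecidableEq V] (har : ∀ r, 1 ≤ ar r)
    {C : Set (Str Rel ar V)} {W : Str Rel ar V} {h β G : V → V} (hW : efStar C W)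
    (hh : CompatibleMap W h) (hβh : ∀ x ∈ W.supp, β x ∉ h '' W.supp)
    (hGh : ∀ x ∈ W.supp, G (h x) = h x) (hGβ : ∀ x ∈ W.supp, G (β x) = h x)
    {a b : V} (ha : a ∈ W.supp) (hb : b ∈ W.supp) (hab : a ≠ b) (hhab : h a = h b) :
    ∃ W' H, efStar C W' ∧ CompatibleMap W' H ∧
      mapStr H W' = (mapStr (Function.update h b (β b)) W).comp
        (mapStr (Function.update (Function.update β a (β b)) b (h a)) W) ∧
      W'.supp.ncard + 2 = 2 * W.supp.ncard := by
  have hβne : ∀ x ∈ W.supp, ∀ y ∈ W.supp, β x ≠ h y :=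
    fun x hx y hy e => hβh x hx ⟨y, hy, e.symm⟩
  obtain ⟨W', H, hW', hH, hmap, hcard⟩ := exists_efStar_selfGlue
    (f1 := Function.update h b (β b)) (f2 := Function.update (Function.update β a (β b)) b (h a))
    (G := G) (P := {a, b}) (τ := Equiv.swap a b) har hW hh
    (fun x hx => by
      rcases eq_or_ne x b with rfl | hxb
      · simp [hGβ x hx]
      · simp [hxb, hGh x hx])
    (fun x hx => by
      rcases eq_or_ne x b with rfl | hxb
      · simp [hGh x hx, hhab]
      rcases eq_or_ne x a with rfl | hxa
      · simp [hxb, hGβ b hb, hhab]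
      · simp [hxa, hxb, hGβ x hx])
    (fun x hx => by
      rcases eq_or_ne x b with rfl | hxb
      · simp [hβne x hx a ha]
      rcases eq_or_ne x a with rfl | hxa
      · simp [hxb, (hβne b hb x hx).symm]
      · simp [hxa, hxb, (hβne x hx x hx).symm])
    ⟨a, Set.mem_insert _ _⟩ (Set.insert_subset ha (Set.singleton_subset_iff.mpr hb))
    (Equiv.injective _).injOn
    (by rintro v (rfl | rfl) <;> simp [Equiv.swap_apply_left, Equiv.swap_apply_right, ha, hb])
    (by rintro v (rfl | rfl) <;> simp [hab])
  exact ⟨W', H, hW', hH, hmap, by rwa [Set.ncard_pair hab] at hcard⟩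

theorem mergeDefect_lt {W W' : Str Rel ar V} {h H β : V → V} {D P : Set V}
    (hβ : Set.InjOn β W.supp) (hβh : ∀ x ∈ W.supp, β x ∉ h '' W.supp) (hDW : D ⊆ W.supp)
    (hcard : W'.supp.ncard + P.ncard = 2 * W.supp.ncard)
    (hsub : h '' W.supp ∪ β '' D ⊆ H '' W'.supp) (hDP : W.supp.ncard < D.ncard + P.ncard)
    (hlt : (h '' W.supp).ncard < W.supp.ncard) : mergeDefect W' H < mergeDefect W h := by
  have hdisj : Disjoint (h '' W.supp) (β '' D) :=
    Set.disjoint_right.mpr fun _ ⟨x, hx, hxy⟩ => hxy ▸ hβh x (hDW hx)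
  have himage := Set.ncard_le_ncard hsub (W'.supp_finite.image H)
  rw [Set.ncard_union_eq hdisj (W.supp_finite.image h) ((W.supp_finite.subset hDW).image β),
    (hβ.mono hDW).ncard_image] at himage
  unfold mergeDefect
  omega

/-- The component `K` of `a` moves to a copy of `W` glued at `a ↦ b`; the original `K` is sent
to fresh values. -/
theorem exists_reduction_of_not_reach [Infinite V] (har : ∀ r, 1 ≤ ar r)
    {C : Set (Str Rel ar V)} {W : Str Rel ar V} {h : V → V} (hW : efStar C W)
    (hh : CompatibleMap W h) {a b : V} (ha : a ∈ W.supp) (hb : b ∈ W.supp) (hab : a ≠ b)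
    (hhab : h a = h b) (hnr : ¬ Relation.ReflTransGen (Touching W) a b) :
    ∃ W' H, efStar C W' ∧ CompatibleMap W' H ∧ IsMinor (mapStr h W) (mapStr H W') ∧
      mergeDefect W' H < mergeDefect W h := by
  classical
  obtain ⟨β, G, hβ, hβh, hGh, hGβ⟩ := exists_fresh_values W h
  set K := {c | Relation.ReflTransGen (Touching W) a c}
  obtain ⟨W', H, hW', hH, hmap, hcard⟩ :=
    exists_efStar_relocateGlue (K := K) har hW hh hβh hGh hGβ ha hb hhab .refl hnr
  refine ⟨W', H, hW', hH, isMinor_of_subset ?_, mergeDefect_lt (P := {a}) hβ hβh subset_rfl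
    (by rwa [Set.ncard_singleton]) ?_ (by simp) (ncard_image_lt_of_ne W.supp_finite ha hb hab hhab)⟩
  · rw [hmap]
    rintro r _ ⟨t, ht, rfl⟩
    by_cases htK : ∃ i, t i ∈ K
    · obtain ⟨i, hi⟩ := htK
      exact Or.inr ⟨t, ht, funext fun j => by
        simp [show t j ∈ K from reflTransGen_touching_of_mem_interp ht hi j]⟩
    · exact Or.inl ⟨t, ht, funext fun j => by simp [show t j ∉ K from fun hj => htK ⟨j, hj⟩]⟩
  · rw [← supp_mapStr H W', hmap, Str.supp_comp, supp_mapStr, supp_mapStr]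
    rintro _ (⟨x, hx, rfl⟩ | ⟨x, hx, rfl⟩) <;> by_cases hxK : x ∈ K
    · exact Or.inr ⟨x, hx, by simp [hxK]⟩
    · exact Or.inl ⟨x, hx, by simp [hxK]⟩
    · exact Or.inl ⟨x, hx, by simp [hxK]⟩
    · exact Or.inr ⟨x, hx, by simp [hxK]⟩

theorem touchConnected_image_component {W X : Str Rel ar V} {f : V → V}
    (hWX : ∀ r, (mapStr f W).interp r ⊆ X.interp r) (a : V) :
    TouchConnected X (f '' {c | Relation.ReflTransGen (Touching W) a c}) := by
  set A := f '' {c | Relation.ReflTransGen (Touching W) a c}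
  have : Std.Symm (TouchingIn X A) := ⟨fun _ _ ⟨hx, hy, hxy⟩ => ⟨hy, hx, hxy.symm⟩⟩
  have hpath : ∀ c, Relation.ReflTransGen (Touching W) a c →
      Relation.ReflTransGen (TouchingIn X A) (f a) (f c) := by
    intro c hc
    induction hc with
    | refl => exact .refl
    | tail hac hcd ih =>
      exact ih.tail ⟨⟨_, hac, rfl⟩, ⟨_, hac.tail hcd, rfl⟩, (hcd.mapStr f).mono hWX⟩
  rintro _ ⟨c, hc, rfl⟩ _ ⟨d, hd, rfl⟩
  exact (Std.Symm.symm _ _ (hpath c hc)).trans (hpath d hd)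

/-- In a copy of `W` glued along the swap of `a` and `b`, the copy of their component is a
bridge between them, which is contracted. -/
theorem exists_reduction_of_reach [Infinite V] (har : ∀ r, 1 ≤ ar r)
    {C : Set (Str Rel ar V)} {W : Str Rel ar V} {h : V → V} (hW : efStar C W)
    (hh : CompatibleMap W h) {a b : V} (ha : a ∈ W.supp) (hb : b ∈ W.supp) (hab : a ≠ b)
    (hhab : h a = h b) (hr : Relation.ReflTransGen (Touching W) a b) :
    ∃ W' H, efStar C W' ∧ CompatibleMap W' H ∧ IsMinor (mapStr h W) (mapStr H W') ∧
      mergeDefect W' H < mergeDefect W h := by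
  classical
  obtain ⟨β, G, hβ, hβh, hGh, hGβ⟩ := exists_fresh_values W h
  obtain ⟨W', H, hW', hH, hmap, hcard⟩ :=
    exists_efStar_swapGlue har hW hh hβh hGh hGβ ha hb hab hhab
  set K := {c | Relation.ReflTransGen (Touching W) a c}
  set f1 := Function.update h b (β b)
  set f2 := Function.update (Function.update β a (β b)) b (h a)
  have hp : h a ∈ f2 '' K := ⟨b, hr, by simp [f2]⟩
  have hF1 : ∀ x ∈ W.supp, (if f1 x ∈ f2 '' K then h a else f1 x) = h x := by
    intro x hx
    rcases eq_or_ne x b with rfl | hxb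
    · simp [f1, show β x ∈ f2 '' K from ⟨a, .refl, by simp [f2, hab]⟩, hhab]
    simp only [f1, Function.update_of_ne hxb]
    split_ifs with hxK
    · obtain ⟨c, hc, e⟩ := hxK
      rcases eq_or_ne c b with rfl | hcb
      · simpa [f2] using e
      rcases eq_or_ne c a with rfl | hca
      · exact absurd ⟨x, hx, by simpa [f2, hcb] using e.symm⟩ (hβh b hb)
      · exact absurd ⟨x, hx, by simpa [f2, hca, hcb] using e.symm⟩
          (hβh c (W.mem_supp_of_reflTransGen ha hc))
    · rfl
  refine ⟨W', H, hW', hH, isMinor_contract hp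
    (touchConnected_image_component (fun _ => hmap ▸ Set.subset_union_right) a) ?_,
    mergeDefect_lt (D := W.supp \ {a}) (P := {a, b}) hβ hβh Set.sdiff_subset
      (by rwa [Set.ncard_pair hab]) ?_ ?_
      (ncard_image_lt_of_ne W.supp_finite ha hb hab hhab)⟩
  · rintro r _ ⟨t, ht, rfl⟩
    rw [hmap]
    exact ⟨f1 ∘ t, Or.inl ⟨t, ht, rfl⟩, funext fun i => hF1 _ (W.mem_supp ht i)⟩
  · rw [← supp_mapStr H W', hmap, Str.supp_comp, supp_mapStr, supp_mapStr]
    rintro _ (⟨x, hx, rfl⟩ | ⟨x, ⟨hx, hxa⟩, rfl⟩) <;> rcases eq_or_ne x b with rfl | hxb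
    · exact Or.inr ⟨x, hx, by simp [f2, hhab]⟩
    · exact Or.inl ⟨x, hx, by simp [f1, hxb]⟩
    · exact Or.inl ⟨x, hx, by simp [f1]⟩
    · exact Or.inr ⟨x, hx, by simp [f2, show x ≠ a from hxa, hxb]⟩
  · rw [Set.ncard_pair hab]
    have := Set.ncard_sdiff_singleton_add_one ha W.supp_finite
    omega

theorem tw_mapStr_le_of_efStar [Infinite V] (har : ∀ r, 1 ≤ ar r) {C : Set (Str Rel ar V)}
    {k : ℕ} (hk : ∀ X, efStar C X → tw X ≤ k) {W : Str Rel ar V} {h : V → V}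
    (hW : efStar C W) (hh : CompatibleMap W h) : tw (mapStr h W) ≤ k := by
  obtain ⟨n, hn⟩ : ∃ n, mergeDefect W h = n := ⟨_, rfl⟩
  induction n using Nat.strong_induction_on generalizing W h with
  | _ n ih =>
  by_cases hinj : Set.InjOn h W.supp
  · exact (isMinor_mapStr_of_injOn hinj).tw_le.trans (hk W hW)
  obtain ⟨a, ha, b, hb, hhab, hab⟩ : ∃ a ∈ W.supp, ∃ b ∈ W.supp, h a = h b ∧ a ≠ b := by
    simpa [Set.InjOn] using hinj
  obtain ⟨W', H, hW', hH, hminor, hlt⟩ :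
      ∃ W' H, efStar C W' ∧ CompatibleMap W' H ∧ IsMinor (mapStr h W) (mapStr H W') ∧
        mergeDefect W' H < mergeDefect W h := by
    by_cases hr : Relation.ReflTransGen (Touching W) a b
    · exact exists_reduction_of_reach har hW hh ha hb hab hhab hr
    · exact exists_reduction_of_not_reach har hW hh ha hb hab hhab hr
  exact hminor.tw_le.trans (ih _ (hn ▸ hlt) hW' hH rfl)

theorem twb_iefStarSet_of_twb_efStarSet [Infinite V] (har : ∀ r, 1 ≤ ar r)
    {C : Set (Str Rel ar V)} (hC : TWB (efStarSet C)) : TWB (iefStarSet C) := by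
  obtain ⟨k, hk⟩ := hC
  refine ⟨k, fun S hS => ?_⟩
  obtain ⟨W, h, hW, hh, rfl⟩ := exists_efStar_of_iefStar har hS
  exact tw_mapStr_le_of_efStar har hk hW hh

end

theorem internal_external_fusion_twb_general
    (Rel : Type) (ar : Rel → ℕ) (har : ∀ r, 1 ≤ ar r)
    (V : Type) [Infinite V] (Pr : Type) (pa : Pr → ℕ)
    (Δ : SID Rel ar Pr pa) (A : Pr) :
    TWB (efStarSet (Canonical (V := V) Δ (natom A))) →
      TWB (iefStarSet (Canonical (V := V) Δ (natom A))) :=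
  twb_iefStarSet_of_twb_efStarSet har

/-- Lemma 3.23: if the closure of the canonical models under
external fusions is treewidth-bounded, then so is the closure under both internal and
external fusions. -/
theorem internal_external_fusion_twb
    (Rel : Type) [Fintype Rel] (ar : Rel → ℕ) (har : ∀ r, 1 ≤ ar r)
    (V : Type) [Infinite V] (Pr : Type) (pa : Pr → ℕ)
    (Δ : SID Rel ar Pr pa) (A : Pr) (hA : pa A = 0) :
    TWB (efStarSet (Canonical (V := V) Δ (natom A))) →
      TWB (iefStarSet (Canonical (V := V) Δ (natom A))) :=
  internal_external_fusion_twb_general Rel ar har V Pr pa Δ A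

end SLRTW
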